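/- Let R = K[x] and P_n the two-term complex R --x^n--> R in degrees -1, 0. For positive integers l, m, n with max(0, m-l) ≤ i < m and max(0, m-n) < j ≤ m, the composition y^j_{m,n} ∘ x^i_{l,m} in K^b(proj R) equals y^{j-i}_{l,n} if j - i > max(0, l-n), and equals 0 otherwise. -/

import Mathlib

/- Setup: `R = K[x]`, the two-term cochain complexes `P n = (R --x^n--> R)` in degrees
`-1, 0`, and the morphisms `x^i_{m,n}` and `y^i_{m,n}` in the bounded homotopy category
`K^b(proj R)` (realized inside the homotopy category of cochain complexes of
`R`-modules). -/

noncomputable section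
open CategoryTheory CategoryTheory.Limits Polynomial ZeroObject CategoryTheory.Pretriangulated

variable (K : Type) [Field K]

abbrev RMod := ModuleCat.of (Polynomial K) (Polynomial K)

/-- Multiplication by `x^a` on `R = K[x]`. -/
def mulX (a : ℕ) : RMod K ⟶ RMod K :=
  ModuleCat.ofHom (LinearMap.mulLeft (Polynomial K) ((X : Polynomial K) ^ a))

lemma mulX_comp (a b : ℕ) : mulX K a ≫ mulX K b = mulX K (a + b) := by
  dsimp [mulX, ModuleCat.ofHom]
  rw [show ((X : Polynomial K) ^ (a + b)) = X ^ b * X ^ a by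
        rw [← pow_add, add_comm],
      LinearMap.mulLeft_mul]
  rfl

/-- The graded pieces of the two-term complexes `P n`. -/
def Pobj : ℤ → ModuleCat (Polynomial K) := fun i =>
  if i = -1 ∨ i = 0 then RMod K else ModuleCat.of (Polynomial K) PUnit

lemma PobjNeg : Pobj K (-1) = RMod K := by simp [Pobj]
lemma PobjZero : Pobj K 0 = RMod K := by simp [Pobj]

/-- The differential of `P n`. -/
def Pd (n : ℕ) : ∀ i : ℤ, Pobj K i ⟶ Pobj K (i + 1) := fun i =>
  if h : i = -1 then
    eqToHom (by rw [h, PobjNeg]) ≫ mulX K n ≫ eqToHom (by rw [h]; norm_num [PobjZero])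
  else 0

/-- The two-term complex `P n = (R --x^n--> R)` in degrees `-1, 0`. -/
def P (n : ℕ) : CochainComplex (ModuleCat (Polynomial K)) ℤ :=
  CochainComplex.of (Pobj K) (Pd K n) (fun i => by
    by_cases h : i = -1
    · have h2 : Pd K n (i + 1) = 0 := dif_neg (by omega)
      rw [h2, Limits.comp_zero]
    · have h1 : Pd K n i = 0 := dif_neg h
      rw [h1, Limits.zero_comp])

lemma P_d_eq_zero (n : ℕ) (i j : ℤ) (hi : i ≠ -1) : (P K n).d i j = 0 := by
  by_cases h : i + 1 = j
  · subst h
    dsimp only [P]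
    rw [CochainComplex.of_d]
    exact dif_neg hi
  · exact HomologicalComplex.shape _ _ _ (by simpa using h)

/-- The components of the chain map which is multiplication by `x^a` in degree `-1`
and by `x^b` in degree `0`. -/
def xComp (a b : ℕ) : ∀ i : ℤ, Pobj K i ⟶ Pobj K i := fun i =>
  if h : i = -1 then eqToHom (by rw [h, PobjNeg]) ≫ mulX K a ≫ eqToHom (by rw [h, PobjNeg])
  else if h0 : i = 0 then
    eqToHom (by rw [h0, PobjZero]) ≫ mulX K b ≫ eqToHom (by rw [h0, PobjZero])
  else 0

/-- The chain map `P m ⟶ P n` which is multiplication by `x^a` in degree `-1` and by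
`x^b` in degree `0`; it commutes with the differentials since `a + n = b + m`. -/
def xMap (m n a b : ℕ) (hab : a + n = b + m) : P K m ⟶ P K n :=
  CochainComplex.ofHom (xComp K a b) (by
    intro i
    dsimp only [P]
    rw [CochainComplex.of_d, CochainComplex.of_d]
    by_cases hi : i = -1
    · subst hi
      show xComp K a b (-1) ≫ Pd K n (-1) = Pd K m (-1) ≫ xComp K a b (-1 + 1)
      rw [show xComp K a b (-1 + 1) = xComp K a b 0 from rfl]
      rw [show xComp K a b (-1) = eqToHom (PobjNeg K) ≫ mulX K a ≫ eqToHom (PobjNeg K).symm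
          from dif_pos rfl]
      rw [show xComp K a b 0 = eqToHom (PobjZero K) ≫ mulX K b ≫ eqToHom (PobjZero K).symm
          from by rw [xComp, dif_neg (by norm_num), dif_pos rfl]]
      rw [show Pd K n (-1) = eqToHom (PobjNeg K) ≫ mulX K n ≫
            eqToHom (by norm_num [PobjZero] : RMod K = Pobj K (-1 + 1))
          from dif_pos rfl]
      rw [show Pd K m (-1) = eqToHom (PobjNeg K) ≫ mulX K m ≫
            eqToHom (by norm_num [PobjZero] : RMod K = Pobj K (-1 + 1))
          from dif_pos rfl]
      simp only [Category.assoc, eqToHom_trans_assoc, eqToHom_refl, Category.id_comp]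
      try simp only [Category.comp_id]
      rw [reassoc_of% mulX_comp, reassoc_of% mulX_comp, hab, Nat.add_comm b m]
      all_goals rfl
    · have h1 : Pd K m i = 0 := dif_neg hi
      have h2 : Pd K n i = 0 := dif_neg hi
      rw [h1, h2, Limits.comp_zero, Limits.zero_comp])

/-- The components of `y^i_{m,n}`. -/
def yComp (m n a : ℕ) : ∀ i : ℤ, (P K m).X i ⟶ ((P K n)⟦(1 : ℤ)⟧).X i := fun i =>
  if h : i = -1 then
    eqToHom (by rw [h]; exact PobjNeg K) ≫ mulX K a ≫
      eqToHom (by rw [h]; show RMod K = Pobj K (-1 + 1); norm_num [PobjZero])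
  else 0

/-- The chain map `P m ⟶ (P n)⟦1⟧` whose only nonzero component is multiplication by
`x^a` in degree `-1` (landing in the degree `0` part of `P n`). -/
def yMap (m n a : ℕ) : P K m ⟶ (P K n)⟦(1 : ℤ)⟧ where
  f := yComp K m n a
  comm' := fun i j hij => by
    have hj : i + 1 = j := hij
    have hY : ∀ i' j' : ℤ, i' ≠ -2 → ((P K n)⟦(1 : ℤ)⟧).d i' j' = 0 := fun i' j' h => by
      rw [CochainComplex.shiftFunctor_obj_d',
        P_d_eq_zero K n _ _ (by change i' + 1 ≠ -1; omega), smul_zero]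
      rfl
    by_cases hi : i = -1
    · rw [hY i j (by omega), Limits.comp_zero,
        show yComp K m n a j = 0 from dif_neg (by omega), Limits.comp_zero]
    · rw [show yComp K m n a i = 0 from dif_neg hi, Limits.zero_comp]
      by_cases hj' : j = -1
      · rw [P_d_eq_zero K m i j hi, Limits.zero_comp]
      · rw [show yComp K m n a j = 0 from dif_neg hj', Limits.comp_zero]

/-- The homotopy category of cochain complexes of `K[x]`-modules, in which the bounded
homotopy category of finitely generated projectives embeds fully faithfully. -/
abbrev KbT := HomotopyCategory (ModuleCat (Polynomial K)) (ComplexShape.up ℤ)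

abbrev Q : CochainComplex (ModuleCat (Polynomial K)) ℤ ⥤ KbT K :=
  HomotopyCategory.quotient _ _

/-- `P n` as an object of the homotopy category. -/
abbrev Pbar (n : ℕ) : KbT K := (Q K).obj (P K n)

/-- The morphism `x^i_{m,n} : P m ⟶ P n` in the homotopy category, defined for
`max (0, n - m) ≤ i` (expressed with truncated subtraction on `ℕ`); in degree `-1` it is
multiplication by `x^(i+m-n)` and in degree `0` multiplication by `x^i`. -/
def xbar (m n i : ℕ) (h : n - m ≤ i) : Pbar K m ⟶ Pbar K n :=
  (Q K).map (xMap K m n (i + m - n) i (by omega))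

/-- The identification `Q(P n ⟦1⟧) ≅ (Q (P n))⟦1⟧` in the homotopy category. -/
def shIso (n : ℕ) : (Q K).obj ((P K n)⟦(1 : ℤ)⟧) ≅ (Pbar K n)⟦(1 : ℤ)⟧ :=
  ((Q K).commShiftIso (1 : ℤ)).app (P K n)

/-- The morphism `y^i_{m,n} : P m ⟶ (P n)[1]` in the homotopy category, defined for
`i ≤ m`; its only nonzero component is multiplication by `x^(m-i)` in degree `-1`. -/
def ybar (m n i : ℕ) (_h : i ≤ m) : Pbar K m ⟶ (Pbar K n)⟦(1 : ℤ)⟧ :=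
  (Q K).map (yMap K m n (m - i)) ≫ (shIso K n).hom

/-!
At the chain level, `x^i_{l,m}` followed by `y^j_{m,n}` is again a map of the shape `y`: it is
multiplication by `x^a` from degree `-1` of `P l` to degree `0` of `P n`, with
`a = (i + l - m) + (m - j)`, i.e. `a = l - (j - i)` when `i < j`. Such a map is null-homotopic as
soon as `n ≤ a` (it factors through the differential `x^n` of `P n`) or `l ≤ a` (it factors
through the differential `x^l` of `P l`), and the condition `i < j ∧ l - n < j - i` is exactly the
negation of both.
-/

lemma P_X_neg_one (n : ℕ) : (P K n).X (-1) = RMod K := PobjNeg K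
lemma P_X_zero (n : ℕ) : (P K n).X 0 = RMod K := PobjZero K
lemma P_shift_X_neg_one (n : ℕ) : ((P K n)⟦(1 : ℤ)⟧).X (-1) = RMod K := PobjZero K
lemma P_shift_X_neg_two (n : ℕ) : ((P K n)⟦(1 : ℤ)⟧).X (-2) = RMod K := PobjNeg K

lemma P_d_neg_one (n : ℕ) :
    (P K n).d (-1) 0 = eqToHom (P_X_neg_one K n) ≫ mulX K n ≫ eqToHom (P_X_zero K n).symm := by
  rw [show (P K n).d (-1) 0 = Pd K n (-1) from
    CochainComplex.of_d (X := Pobj K) (d := Pd K n) (-1), Pd, dif_pos rfl]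
  rfl

lemma P_shift_d_neg_two (n : ℕ) : ((P K n)⟦(1 : ℤ)⟧).d (-2) (-1) =
    -(eqToHom (P_shift_X_neg_two K n) ≫ mulX K n ≫ eqToHom (P_shift_X_neg_one K n).symm) := by
  rw [show ((P K n)⟦(1 : ℤ)⟧).d (-2) (-1) = (1 : ℤ).negOnePow • (P K n).d (-1) 0 from rfl,
    Int.negOnePow_one, P_d_neg_one, Units.neg_smul, one_smul]
  rfl

lemma P_shift_d_neg_one (n : ℕ) : ((P K n)⟦(1 : ℤ)⟧).d (-1) 0 = 0 := by
  rw [show ((P K n)⟦(1 : ℤ)⟧).d (-1) 0 = (1 : ℤ).negOnePow • (P K n).d 0 1 from rfl,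
    P_d_eq_zero K n 0 1 (by decide), smul_zero]
  rfl

lemma xMap_f_neg_one (m n a b : ℕ) (hab : a + n = b + m) : (xMap K m n a b hab).f (-1) =
    eqToHom (P_X_neg_one K m) ≫ mulX K a ≫ eqToHom (P_X_neg_one K n).symm := by
  rw [show (xMap K m n a b hab).f (-1) = xComp K a b (-1) from rfl, xComp, dif_pos rfl]
  rfl

lemma yMap_f_neg_one (m n a : ℕ) : (yMap K m n a).f (-1) =
    eqToHom (P_X_neg_one K m) ≫ mulX K a ≫ eqToHom (P_shift_X_neg_one K n).symm := by
  rw [show (yMap K m n a).f (-1) = yComp K m n a (-1) from rfl, yComp, dif_pos rfl]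

lemma yMap_f_of_ne (m n a : ℕ) {i : ℤ} (hi : i ≠ -1) : (yMap K m n a).f i = 0 :=
  dif_neg hi

lemma xMap_comp_yMap (l m n a b c : ℕ) (hab : a + m = b + l) :
    xMap K l m a b hab ≫ yMap K m n c = yMap K l n (a + c) := by
  ext i : 1
  rw [HomologicalComplex.comp_f]
  by_cases hi : i = -1
  · subst hi
    rw [xMap_f_neg_one, yMap_f_neg_one, yMap_f_neg_one]
    simp only [Category.assoc, eqToHom_trans_assoc, eqToHom_refl, Category.id_comp]
    rw [← Category.assoc (mulX K a), mulX_comp]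
  · rw [yMap_f_of_ne K m n c hi, yMap_f_of_ne K l n (a + c) hi, Limits.comp_zero]

/-- The differential of `(P n)⟦1⟧` in degree `-2` is `-x^n`, whence the sign. -/
def homotopyHomThroughTarget (l n a : ℕ) (p q : ℤ) : (P K l).X p ⟶ ((P K n)⟦(1 : ℤ)⟧).X q :=
  if hpq : p = -1 ∧ q = -2 then
    -(eqToHom (by rw [hpq.1]; exact P_X_neg_one K l) ≫ mulX K (a - n) ≫
      eqToHom (by rw [hpq.2]; exact (P_shift_X_neg_two K n).symm))
  else 0

lemma homotopyHomThroughTarget_neg_one (l n a : ℕ) : homotopyHomThroughTarget K l n a (-1) (-2) =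
    -(eqToHom (P_X_neg_one K l) ≫ mulX K (a - n) ≫ eqToHom (P_shift_X_neg_two K n).symm) :=
  dif_pos ⟨rfl, rfl⟩

lemma homotopyHomThroughTarget_of_ne (l n a : ℕ) {p q : ℤ} (h : ¬(p = -1 ∧ q = -2)) :
    homotopyHomThroughTarget K l n a p q = 0 :=
  dif_neg h

def yMapHomotopyZeroOfTargetLE (l n a : ℕ) (h : n ≤ a) : Homotopy (yMap K l n a) 0 where
  hom := homotopyHomThroughTarget K l n a
  zero p q hpq :=
    homotopyHomThroughTarget_of_ne K l n a (by rintro ⟨rfl, rfl⟩; exact hpq (by decide))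
  comm i := by
    by_cases hi : i = -1
    · subst hi
      rw [dNext_eq _ (show (ComplexShape.up ℤ).Rel (-1) 0 by decide),
        prevD_eq _ (show (ComplexShape.up ℤ).Rel (-2) (-1) by decide),
        homotopyHomThroughTarget_of_ne K l n a (p := 0) (q := -1) (by omega), Limits.comp_zero,
        homotopyHomThroughTarget_neg_one, yMap_f_neg_one, P_shift_d_neg_two,
        HomologicalComplex.zero_f, zero_add, add_zero]
      simp only [Preadditive.comp_neg, Preadditive.neg_comp, neg_neg, Category.assoc,
        eqToHom_trans_assoc, eqToHom_refl, Category.id_comp]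
      rw [← Category.assoc (mulX K (a - n)), mulX_comp, Nat.sub_add_cancel h]
    · rw [yMap_f_of_ne K l n a hi, HomologicalComplex.zero_f, add_zero,
        prevD_eq _ (show i - 1 + 1 = i by omega),
        homotopyHomThroughTarget_of_ne K l n a (fun hc => hi hc.1), Limits.zero_comp, add_zero,
        dNext_eq _ (show (ComplexShape.up ℤ).Rel i (i + 1) from rfl)]
      by_cases hi2 : i = -2
      · subst hi2
        rw [P_d_eq_zero K l _ _ (by decide), Limits.zero_comp]
      · rw [homotopyHomThroughTarget_of_ne K l n a (fun hc => hi2 hc.2), Limits.comp_zero]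

def homotopyHomThroughSource (l n a : ℕ) (p q : ℤ) : (P K l).X p ⟶ ((P K n)⟦(1 : ℤ)⟧).X q :=
  if hpq : p = 0 ∧ q = -1 then
    eqToHom (by rw [hpq.1]; exact P_X_zero K l) ≫ mulX K (a - l) ≫
      eqToHom (by rw [hpq.2]; exact (P_shift_X_neg_one K n).symm)
  else 0

lemma homotopyHomThroughSource_zero (l n a : ℕ) : homotopyHomThroughSource K l n a 0 (-1) =
    eqToHom (P_X_zero K l) ≫ mulX K (a - l) ≫ eqToHom (P_shift_X_neg_one K n).symm :=
  dif_pos ⟨rfl, rfl⟩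

lemma homotopyHomThroughSource_of_ne (l n a : ℕ) {p q : ℤ} (h : ¬(p = 0 ∧ q = -1)) :
    homotopyHomThroughSource K l n a p q = 0 :=
  dif_neg h

def yMapHomotopyZeroOfSourceLE (l n a : ℕ) (h : l ≤ a) : Homotopy (yMap K l n a) 0 where
  hom := homotopyHomThroughSource K l n a
  zero p q hpq :=
    homotopyHomThroughSource_of_ne K l n a (by rintro ⟨rfl, rfl⟩; exact hpq (by decide))
  comm i := by
    by_cases hi : i = -1
    · subst hi
      rw [dNext_eq _ (show (ComplexShape.up ℤ).Rel (-1) 0 by decide),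
        prevD_eq _ (show (-2 : ℤ) + 1 = -1 by decide),
        homotopyHomThroughSource_of_ne K l n a (p := -1) (q := -2) (by omega), Limits.zero_comp,
        homotopyHomThroughSource_zero, P_d_neg_one, yMap_f_neg_one,
        HomologicalComplex.zero_f, add_zero, add_zero]
      simp only [Category.assoc, eqToHom_trans_assoc, eqToHom_refl, Category.id_comp]
      rw [← Category.assoc (mulX K l), mulX_comp, Nat.add_sub_cancel' h]
    · rw [yMap_f_of_ne K l n a hi, HomologicalComplex.zero_f, add_zero,
        dNext_eq _ (show (ComplexShape.up ℤ).Rel i (i + 1) from rfl),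
        prevD_eq _ (show i - 1 + 1 = i by omega),
        homotopyHomThroughSource_of_ne K l n a (fun hc => hi hc.2), Limits.comp_zero, zero_add]
      by_cases hi0 : i = 0
      · subst hi0
        rw [show ((0 : ℤ) - 1) = -1 by decide, P_shift_d_neg_one, Limits.comp_zero]
      · rw [homotopyHomThroughSource_of_ne K l n a (fun hc => hi0 hc.1), Limits.zero_comp]

lemma Q_map_yMap_eq_zero (l n a : ℕ) (h : n ≤ a ∨ l ≤ a) : (Q K).map (yMap K l n a) = 0 := by
  rw [← Functor.map_zero (Q K) (P K l) _]
  rcases h with h | h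
  · exact HomotopyCategory.eq_of_homotopy _ _ (yMapHomotopyZeroOfTargetLE K l n a h)
  · exact HomotopyCategory.eq_of_homotopy _ _ (yMapHomotopyZeroOfSourceLE K l n a h)

/-- for positive `l, m, n` with `max (0, m-l) ≤ i < m` and
`max (0, m-n) < j ≤ m`, the composition `y^j_{m,n} ∘ x^i_{l,m}` equals `y^(j-i)_{l,n}`
if `j - i > max (0, l-n)`, and `0` otherwise. -/
theorem ybar_comp_xbar (l m n : ℕ) (i j : ℕ) (hi : m - l ≤ i) (hj : j ≤ m) :
    xbar K l m i hi ≫ ybar K m n j hj =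
      if i < j ∧ l - n < j - i then ybar K l n (j - i) (by omega) else 0 := by
  rw [xbar, ybar, ← Category.assoc, ← Functor.map_comp, xMap_comp_yMap]
  split_ifs with hc
  · rw [ybar, show i + l - m + (m - j) = l - (j - i) by omega]
  · rw [Q_map_yMap_eq_zero K l n _ (by omega), Limits.zero_comp]
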